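/- arXiv:math/0505187 — 2 statements merged into one kernel-verified Lean document; each statement's English description precedes it below -/
import Mathlib

section
/- For every natural number n, there exist integers x, y, z with 8n + 3 = 2(4x)² + 2(2y+1)² + (2z+1)². -/
/-!
A positive definite integral ternary form of determinant 1 takes only sums of three squares as
values. Its minimum `μ` is attained at a primitive vector, which completes to a unimodular basis,
so `μ` may be taken as the corner coefficient. Completing the square then splits off a binary form
(the `2 × 2` minors through the corner) whose values at nonzero vectors are at least `3μ²/4`, and
Hermite's bound for binary forms forces `μ = 1`. What remains is a positive binary form of
determinant 1, which reduces to `y² + z²`.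

For `N ≡ 3 (mod 8)`, Dirichlet's theorem gives a prime `p ≡ (N - 1)/2 (mod 4N)`. Then
`N d = 2p + 1` for some `d`, quadratic reciprocity makes `-d` a square modulo `2p`, say
`x² + d = 2p l`, and the form `[[l, x, 1], [x, 2p, 0], [1, 0, N]]` has determinant
`N d - 2p = 1` and represents `N`. In `N = a² + b² + c²` all three squares are odd, and two of
`a, b, c` agree modulo 8 up to sign, say `a ≡ b`. Then
`a² + b² = 2((a - b)/2)² + 2((a + b)/2)²`, where `4 ∣ (a - b)/2` and `(a + b)/2` is odd.
-/

open Matrix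

theorem Int.exists_abs_two_mul_add_mul_le (b : ℤ) {m : ℤ} (hm : 0 < m) :
    ∃ k, |2 * (b + k * m)| ≤ m := by
  have h0 := Int.emod_nonneg b hm.ne'
  have h1 := Int.emod_lt_of_pos b hm
  have h := Int.emod_def b m
  rcases le_or_gt (2 * (b % m)) m with h2 | h2
  · refine ⟨-(b / m), abs_le.mpr ⟨?_, ?_⟩⟩ <;> nlinarith
  · refine ⟨-(b / m) - 1, abs_le.mpr ⟨?_, ?_⟩⟩ <;> nlinarith

namespace Matrix

theorem PosDef.isSymm {n R : Type*} [CommRing R] [PartialOrder R] [StarRing R] [TrivialStar R]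
    {G : Matrix n n R} (hG : G.PosDef) : G.IsSymm :=
  isHermitian_iff_isSymm.mp hG.isHermitian

section CommSemiring
variable {n R : Type*} [Fintype n] [CommSemiring R]

theorem transpose_mul_mul_apply (G U : Matrix n n R) (i j : n) :
    (Uᵀ * G * U) i j = Uᵀ i ⬝ᵥ G *ᵥ Uᵀ j := by
  simp only [mul_apply, transpose_apply, dotProduct, mulVec, Finset.sum_mul, Finset.mul_sum]
  rw [Finset.sum_comm]; congr 1; ext; congr 1; ext; ring

theorem dotProduct_transpose_mul_mul_mulVec (G U : Matrix n n R) (v : n → R) :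
    v ⬝ᵥ (Uᵀ * G * U) *ᵥ v = U *ᵥ v ⬝ᵥ G *ᵥ (U *ᵥ v) := by
  rw [← mulVec_mulVec, ← mulVec_mulVec, dotProduct_mulVec, vecMul_transpose]

theorem IsSymm.dotProduct_mulVec_fin_two {H : Matrix (Fin 2) (Fin 2) R} (hH : H.IsSymm)
    (v : Fin 2 → R) :
    v ⬝ᵥ H *ᵥ v = H 0 0 * v 0 ^ 2 + 2 * H 0 1 * v 0 * v 1 + H 1 1 * v 1 ^ 2 := by
  simp only [dotProduct, mulVec, Fin.sum_univ_two, hH.apply 0 1]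
  ring

end CommSemiring

section CommRing
variable {n R : Type*} [Fintype n] [DecidableEq n] [CommRing R]

theorem exists_dotProduct_transpose_mul_mul_mulVec_eq (G : Matrix n n R) {U : Matrix n n R}
    (hU : IsUnit U) (v : n → R) : ∃ w, w ⬝ᵥ (Uᵀ * G * U) *ᵥ w = v ⬝ᵥ G *ᵥ v := by
  obtain ⟨w, rfl⟩ := mulVec_surjective_iff_isUnit.mpr hU v
  exact ⟨w, dotProduct_transpose_mul_mul_mulVec G U w⟩

theorem transpose_apply_ne_zero_of_isUnit [Nontrivial R] {U : Matrix n n R} (hU : IsUnit U)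
    (i : n) : Uᵀ i ≠ 0 := by
  have hcol : Uᵀ i = U *ᵥ Pi.single i 1 := by ext; simp
  rw [hcol, ← mulVec_zero U, (mulVec_injective_of_isUnit hU).ne_iff]
  simp

theorem det_transpose_mul_mul_of_det_eq_one (G : Matrix n n R) {U : Matrix n n R}
    (hU : U.det = 1) : (Uᵀ * G * U).det = G.det := by
  simp [hU]

theorem PosDef.transpose_mul_mul_same [PartialOrder R] [StarRing R] [TrivialStar R]
    {G U : Matrix n n R} (hG : G.PosDef) (hU : IsUnit U) : (Uᵀ * G * U).PosDef := by
  simpa [conjTranspose_eq_transpose_of_trivial] using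
    hG.conjTranspose_mul_mul_same (mulVec_injective_of_isUnit hU)

/-- Chiò condensation at the pivot `H 0 0`: the entries are the `2 × 2` minors of `H` through
`H 0 0`. -/
def pivotMinors (H : Matrix (Fin 3) (Fin 3) R) : Matrix (Fin 2) (Fin 2) R :=
  of fun i j => H 0 0 * H i.succ j.succ - H i.succ 0 * H 0 j.succ

theorem det_pivotMinors (H : Matrix (Fin 3) (Fin 3) R) :
    H.pivotMinors.det = H 0 0 * H.det := by
  simp only [pivotMinors, det_fin_two, det_fin_three, of_apply, Fin.succ_zero_eq_one,
    Fin.succ_one_eq_two]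
  ring

theorem IsSymm.pivotMinors {H : Matrix (Fin 3) (Fin 3) R} (hH : H.IsSymm) :
    H.pivotMinors.IsSymm := by
  refine IsSymm.ext fun i j => ?_
  simp only [Matrix.pivotMinors, of_apply, hH.apply]
  ring

theorem IsSymm.mul_dotProduct_mulVec_eq {H : Matrix (Fin 3) (Fin 3) R} (hH : H.IsSymm)
    (v : Fin 3 → R) :
    H 0 0 * (v ⬝ᵥ H *ᵥ v) = (H 0 ⬝ᵥ v) ^ 2 + vecTail v ⬝ᵥ H.pivotMinors *ᵥ vecTail v := by
  simp only [Matrix.pivotMinors, dotProduct, mulVec, vecTail, Fin.sum_univ_two,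
    Fin.sum_univ_three, Function.comp_apply, of_apply, Fin.succ_zero_eq_one, Fin.succ_one_eq_two,
    hH.apply 0 1, hH.apply 0 2, hH.apply 1 2]
  ring

end CommRing

section LinearOrder
variable {R : Type*} [CommRing R] [LinearOrder R] [IsStrictOrderedRing R]

theorem IsSymm.three_mul_sq_le_det_fin_two {H : Matrix (Fin 2) (Fin 2) R} (hH : H.IsSymm)
    (h₀₁ : |2 * H 0 1| ≤ H 0 0) (h₁₁ : H 0 0 ≤ H 1 1) : 3 * H 0 0 ^ 2 ≤ 4 * H.det := by
  rw [det_fin_two, hH.apply 0 1]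
  have := sq_le_sq' (abs_le.mp h₀₁).1 (abs_le.mp h₀₁).2
  nlinarith [abs_nonneg (2 * H 0 1)]

variable [StarRing R] [TrivialStar R]

theorem posDef_fin_two_of_isSymm {H : Matrix (Fin 2) (Fin 2) R} (hH : H.IsSymm)
    (h₀₀ : 0 < H 0 0) (hdet : 0 < H.det) : H.PosDef := by
  refine .of_dotProduct_mulVec_pos (isHermitian_iff_isSymm.mpr hH) fun v hv => ?_
  rw [star_trivial, hH.dotProduct_mulVec_fin_two]
  rw [det_fin_two, hH.apply 0 1] at hdet
  rcases eq_or_ne (v 1) 0 with h1 | h1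
  · have h0 : v 0 ≠ 0 := fun h0 => hv (by ext i; fin_cases i <;> simp [h0, h1])
    rw [h1]
    have : 0 < v 0 ^ 2 := by positivity
    nlinarith
  · have : 0 < v 1 ^ 2 := by positivity
    nlinarith [sq_nonneg (H 0 0 * v 0 + H 0 1 * v 1)]

theorem posDef_fin_three_of_isSymm {H : Matrix (Fin 3) (Fin 3) R} (hH : H.IsSymm)
    (h₀₀ : 0 < H 0 0) (h₁₁ : 0 < H 0 0 * H 1 1 - H 0 1 ^ 2) (hdet : 0 < H.det) : H.PosDef := by
  have hφ : H.pivotMinors.PosDef := by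
    refine posDef_fin_two_of_isSymm hH.pivotMinors ?_ (by rw [det_pivotMinors]; positivity)
    simpa [pivotMinors, hH.apply 0 1, sq] using h₁₁
  refine .of_dotProduct_mulVec_pos (isHermitian_iff_isSymm.mpr hH) fun v hv => ?_
  rw [star_trivial]
  refine pos_of_mul_pos_right (a := H 0 0) ?_ h₀₀.le
  rw [hH.mul_dotProduct_mulVec_eq]
  rcases eq_or_ne (vecTail v) 0 with h | h
  · have hv0 : v 0 ≠ 0 := fun h0 => hv (by rw [← cons_head_tail v, h]; simp [vecHead, h0])
    have : H 0 ⬝ᵥ v = H 0 0 * v 0 := by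
      rw [← cons_head_tail v, h]; simp [vecHead]
    rw [this, h, mulVec_zero, dotProduct_zero, add_zero]
    positivity
  · have := hφ.dotProduct_mulVec_pos h
    rw [star_trivial] at this
    positivity

end LinearOrder

section Int

theorem PosDef.exists_primitive_min {n : Type*} [Fintype n] [Nonempty n] [DecidableEq n]
    {G : Matrix n n ℤ} (hG : G.PosDef) :
    ∃ v ≠ 0, (∀ w ≠ 0, v ⬝ᵥ G *ᵥ v ≤ w ⬝ᵥ G *ᵥ w) ∧ ∀ (k : ℤ) w, v = k • w → IsUnit k := by
  have hpos (v : n → ℤ) (hv : v ≠ 0) : 0 < v ⬝ᵥ G *ᵥ v := by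
    simpa using hG.dotProduct_mulVec_pos hv
  obtain ⟨m, ⟨v, hv, rfl⟩, hmin⟩ := Int.exists_least_of_bdd
    (P := fun m => ∃ v ≠ 0, v ⬝ᵥ G *ᵥ v = m)
    ⟨0, by rintro _ ⟨v, hv, rfl⟩; exact (hpos v hv).le⟩
    ⟨_, Pi.single (Classical.arbitrary n) 1, by simp, rfl⟩
  refine ⟨v, hv, fun w hw => hmin _ ⟨w, hw, rfl⟩, fun k w hkw => ?_⟩
  subst hkw
  have hw : w ≠ 0 := by rintro rfl; simp at hv
  have hk : k ≠ 0 := by rintro rfl; simp at hv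
  have hle := hmin _ ⟨w, hw, rfl⟩
  rw [mulVec_smul, smul_dotProduct, dotProduct_smul, smul_smul, smul_eq_mul] at hle
  have := hpos w hw
  have : k * k ≤ 1 := by nlinarith
  have : -1 ≤ k ∧ k ≤ 1 := by constructor <;> nlinarith
  rw [Int.isUnit_iff]
  omega

theorem isCoprime_of_forall_eq_smul {v : Fin 2 → ℤ} (hv : ∀ (k : ℤ) w, v = k • w → IsUnit k) :
    IsCoprime (v 0) (v 1) := by
  obtain ⟨x, y, hx, hy, hxy⟩ := extract_gcd (v 0) (v 1)
  generalize gcd (v 0) (v 1) = g at hx hy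
  have hg : IsUnit g := hv g ![x, y] (by ext i; fin_cases i; exacts [hx, hy])
  rw [hx, hy, isCoprime_mul_unit_left hg]
  exact (gcd_isUnit_iff _ _).mp hxy

theorem exists_det_eq_one_transpose_apply_zero {v : Fin 3 → ℤ}
    (hv : ∀ (k : ℤ) w, v = k • w → IsUnit k) :
    ∃ U : Matrix (Fin 3) (Fin 3) ℤ, U.det = 1 ∧ Uᵀ 0 = v := by
  obtain ⟨x, y, hx, hy, hxy⟩ := extract_gcd (v 0) (v 1)
  generalize gcd (v 0) (v 1) = d at hx hy
  obtain ⟨d', z, hd, hz, hdz⟩ := extract_gcd d (v 2)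
  generalize gcd d (v 2) = g at hd hz
  have hg : IsUnit g := hv g ![d' * x, d' * y, z] (by
    ext i; fin_cases i
    · simp [hx, hd, mul_assoc]
    · simp [hy, hd, mul_assoc]
    · exact hz)
  obtain ⟨a, b, hab⟩ := (gcd_isUnit_iff _ _).mp hxy
  obtain ⟨e, f, hef⟩ : IsCoprime d (v 2) := by
    rw [hd, hz, isCoprime_mul_unit_left hg]
    exact (gcd_isUnit_iff _ _).mp hdz
  -- expanding along the last column, the determinant is `(e d + f v₂)(a x + b y) = 1`
  refine ⟨!![v 0, -b, -f * x; v 1, a, -f * y; v 2, 0, e], ?_, ?_⟩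
  · simp only [det_fin_three, of_apply, cons_val', cons_val_zero, cons_val_one, cons_val,
      cons_val_fin_one]
    linear_combination e * a * hx + e * b * hy + (e * d + f * v 2) * hab + hef
  · ext i; fin_cases i <;> rfl

theorem PosDef.exists_reduced_fin_two {G : Matrix (Fin 2) (Fin 2) ℤ} (hG : G.PosDef) :
    ∃ U : Matrix (Fin 2) (Fin 2) ℤ, U.det = 1 ∧
      |2 * (Uᵀ * G * U) 0 1| ≤ (Uᵀ * G * U) 0 0 ∧ (Uᵀ * G * U) 0 0 ≤ (Uᵀ * G * U) 1 1 := by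
  obtain ⟨v, hv, hmin, hprim⟩ := hG.exists_primitive_min
  obtain ⟨a, b, hab⟩ := isCoprime_of_forall_eq_smul hprim
  have hm : 0 < v ⬝ᵥ G *ᵥ v := by simpa using hG.dotProduct_mulVec_pos hv
  obtain ⟨k, hk⟩ := Int.exists_abs_two_mul_add_mul_le (v ⬝ᵥ G *ᵥ ![-b, a]) hm
  set w := ![-b, a] + k • v
  have hU : (of ![v, w])ᵀ.det = 1 := by
    simp only [det_transpose, det_fin_two, of_apply, cons_val_zero, cons_val_one, w,
      Pi.add_apply, Pi.smul_apply, smul_eq_mul]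
    linear_combination hab
  have hH (i j : Fin 2) :
      ((of ![v, w])ᵀᵀ * G * (of ![v, w])ᵀ) i j = ![v, w] i ⬝ᵥ G *ᵥ ![v, w] j := by
    rw [transpose_mul_mul_apply, transpose_transpose]; rfl
  refine ⟨(of ![v, w])ᵀ, hU, ?_, ?_⟩ <;> simp only [hH, cons_val_zero, cons_val_one]
  · simpa only [w, mulVec_add, mulVec_smul, dotProduct_add, dotProduct_smul, smul_eq_mul] using hk
  · exact hmin w <|
      transpose_apply_ne_zero_of_isUnit ((isUnit_iff_isUnit_det _).mpr (hU ▸ isUnit_one)) 1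

theorem PosDef.exists_three_mul_sq_le_fin_two {G : Matrix (Fin 2) (Fin 2) ℤ} (hG : G.PosDef) :
    ∃ v ≠ 0, 3 * (v ⬝ᵥ G *ᵥ v) ^ 2 ≤ 4 * G.det := by
  obtain ⟨U, hU, h₀₁, h₁₁⟩ := hG.exists_reduced_fin_two
  have hUu : IsUnit U := (isUnit_iff_isUnit_det _).mpr (hU ▸ isUnit_one)
  refine ⟨Uᵀ 0, transpose_apply_ne_zero_of_isUnit hUu 0, ?_⟩
  rw [← transpose_mul_mul_apply, ← det_transpose_mul_mul_of_det_eq_one G hU]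
  exact (hG.transpose_mul_mul_same hUu).isSymm.three_mul_sq_le_det_fin_two h₀₁ h₁₁

theorem PosDef.exists_sq_add_sq_of_det_eq_one {G : Matrix (Fin 2) (Fin 2) ℤ} (hG : G.PosDef)
    (hdet : G.det = 1) (v : Fin 2 → ℤ) : ∃ a b, v ⬝ᵥ G *ᵥ v = a ^ 2 + b ^ 2 := by
  obtain ⟨U, hU, h₀₁, h₁₁⟩ := hG.exists_reduced_fin_two
  have hUu : IsUnit U := (isUnit_iff_isUnit_det _).mpr (hU ▸ isUnit_one)
  set H := Uᵀ * G * U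
  have hH : H.PosDef := hG.transpose_mul_mul_same hUu
  have hdetH : H.det = 1 := by rw [det_transpose_mul_mul_of_det_eq_one G hU, hdet]
  have hHermite := hH.isSymm.three_mul_sq_le_det_fin_two h₀₁ h₁₁
  have h₀₀ : H 0 0 = 1 := by
    have := hH.diag_pos (i := 0)
    rw [hdetH] at hHermite
    nlinarith
  have h₀₁' : H 0 1 = 0 := by
    have := abs_le.mp (h₀₀ ▸ h₀₁)
    omega
  have h₁₁' : H 1 1 = 1 := by
    rw [det_fin_two, hH.isSymm.apply 0 1, h₀₀, h₀₁'] at hdetH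
    linarith
  obtain ⟨w, hw⟩ := exists_dotProduct_transpose_mul_mul_mulVec_eq G hUu v
  refine ⟨w 0, w 1, ?_⟩
  rw [← hw, hH.isSymm.dotProduct_mulVec_fin_two, h₀₀, h₀₁', h₁₁']
  ring

theorem PosDef.exists_min_corner_fin_three {G : Matrix (Fin 3) (Fin 3) ℤ} (hG : G.PosDef) :
    ∃ U : Matrix (Fin 3) (Fin 3) ℤ, U.det = 1 ∧
      ∀ w ≠ 0, (Uᵀ * G * U) 0 0 ≤ w ⬝ᵥ (Uᵀ * G * U) *ᵥ w := by
  obtain ⟨v, -, hmin, hprim⟩ := hG.exists_primitive_min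
  obtain ⟨U, hU, hUv⟩ := exists_det_eq_one_transpose_apply_zero hprim
  have hUu : IsUnit U := (isUnit_iff_isUnit_det _).mpr (hU ▸ isUnit_one)
  refine ⟨U, hU, fun w hw => ?_⟩
  rw [transpose_mul_mul_apply, hUv, dotProduct_transpose_mul_mul_mulVec]
  exact hmin _ (by rwa [← mulVec_zero U, (mulVec_injective_of_isUnit hUu).ne_iff])

theorem IsSymm.three_mul_sq_le_pivotMinors {H : Matrix (Fin 3) (Fin 3) ℤ} (hH : H.IsSymm)
    (h₀₀ : 0 < H 0 0) (hmin : ∀ w ≠ 0, H 0 0 ≤ w ⬝ᵥ H *ᵥ w) {y : Fin 2 → ℤ} (hy : y ≠ 0) :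
    3 * H 0 0 ^ 2 ≤ 4 * (y ⬝ᵥ H.pivotMinors *ᵥ y) := by
  obtain ⟨k, hk⟩ := Int.exists_abs_two_mul_add_mul_le (vecTail (H 0) ⬝ᵥ y) h₀₀
  have hw : vecCons k y ≠ 0 := fun h => hy (by simpa using congrArg vecTail h)
  have hsplit := hH.mul_dotProduct_mulVec_eq (vecCons k y)
  rw [tail_cons, dotProduct_cons, show vecHead (H 0) = H 0 0 from rfl] at hsplit
  have := mul_le_mul_of_nonneg_left (hmin _ hw) h₀₀.le
  have := sq_le_sq' (abs_le.mp hk).1 (abs_le.mp hk).2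
  nlinarith

theorem PosDef.pivotMinors_of_min {H : Matrix (Fin 3) (Fin 3) ℤ} (hH : H.PosDef)
    (hmin : ∀ w ≠ 0, H 0 0 ≤ w ⬝ᵥ H *ᵥ w) : H.pivotMinors.PosDef := by
  refine .of_dotProduct_mulVec_pos (isHermitian_iff_isSymm.mpr hH.isSymm.pivotMinors)
    fun y hy => ?_
  have := hH.isSymm.three_mul_sq_le_pivotMinors hH.diag_pos hmin hy
  have := hH.diag_pos (i := 0)
  rw [star_trivial]
  nlinarith

theorem PosDef.apply_zero_zero_eq_one_of_min {H : Matrix (Fin 3) (Fin 3) ℤ} (hH : H.PosDef)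
    (hdet : H.det = 1) (hmin : ∀ w ≠ 0, H 0 0 ≤ w ⬝ᵥ H *ᵥ w) : H 0 0 = 1 := by
  obtain ⟨y, hy, hHermite⟩ := (hH.pivotMinors_of_min hmin).exists_three_mul_sq_le_fin_two
  have hlow := hH.isSymm.three_mul_sq_le_pivotMinors hH.diag_pos hmin hy
  rw [det_pivotMinors, hdet, mul_one] at hHermite
  have hpos := hH.diag_pos (i := 0)
  have := pow_le_pow_left₀ (by positivity) hlow 2
  have : 27 * H 0 0 ^ 4 ≤ 64 * H 0 0 := by nlinarith
  by_contra hne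
  have := pow_le_pow_left₀ (by norm_num) (show 2 ≤ H 0 0 by omega) 3
  nlinarith

theorem PosDef.exists_sq_add_sq_add_sq_of_det_eq_one {G : Matrix (Fin 3) (Fin 3) ℤ}
    (hG : G.PosDef) (hdet : G.det = 1) (v : Fin 3 → ℤ) :
    ∃ a b c, v ⬝ᵥ G *ᵥ v = a ^ 2 + b ^ 2 + c ^ 2 := by
  obtain ⟨U, hU, hmin⟩ := hG.exists_min_corner_fin_three
  have hUu : IsUnit U := (isUnit_iff_isUnit_det _).mpr (hU ▸ isUnit_one)
  set H := Uᵀ * G * U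
  have hH : H.PosDef := hG.transpose_mul_mul_same hUu
  have hdetH : H.det = 1 := by rw [det_transpose_mul_mul_of_det_eq_one G hU, hdet]
  have h₀₀ := hH.apply_zero_zero_eq_one_of_min hdetH hmin
  have hφ : H.pivotMinors.det = 1 := by rw [det_pivotMinors, h₀₀, hdetH, mul_one]
  obtain ⟨w, hw⟩ := exists_dotProduct_transpose_mul_mul_mulVec_eq G hUu v
  obtain ⟨b, c, hbc⟩ :=
    (hH.pivotMinors_of_min hmin).exists_sq_add_sq_of_det_eq_one hφ (vecTail w)
  have hsplit := hH.isSymm.mul_dotProduct_mulVec_eq w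
  rw [h₀₀, one_mul, hbc] at hsplit
  exact ⟨H 0 ⬝ᵥ w, b, c, by rw [← hw, hsplit, add_assoc]⟩

end Int

end Matrix

theorem IsSquare.neg_of_mul_eq_one {R : Type*} [CommRing R] {a b : R} (hab : a * b = 1)
    (h : IsSquare (-a)) : IsSquare (-b) := by
  have : -b = -a * (b * b) := by linear_combination b * hab
  rw [this]
  exact h.mul (IsSquare.mul_self b)

theorem exists_two_mul_dvd_sq_add {p : ℕ} (hp : Odd p) {d : ℤ} (hd : Odd d)
    (hsq : IsSquare (-(d : ZMod p))) : ∃ x : ℤ, 2 * (p : ℤ) ∣ x ^ 2 + d := by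
  obtain ⟨u, hu⟩ := hsq
  obtain ⟨x, rfl⟩ := ZMod.intCast_surjective u
  have hpx : (p : ℤ) ∣ x ^ 2 + d := by
    rw [← ZMod.intCast_zmod_eq_zero_iff_dvd]
    push_cast
    linear_combination -hu
  have hcop : IsCoprime (2 : ℤ) p := by
    exact_mod_cast Nat.isCoprime_iff_coprime.mpr (Nat.coprime_two_left.mpr hp)
  refine ⟨x + p * (x + 1), hcop.mul_dvd ?_ ?_⟩
  · have hp' : Odd (p : ℤ) := by exact_mod_cast hp
    have hodd : Odd (x + p * (x + 1)) := by
      rw [show x + p * (x + 1) = (x + 1) * (p + 1) - 1 by ring]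
      exact (hp'.add_one.mul_left _).sub_odd odd_one
    exact even_iff_two_dvd.mp (hodd.pow.add_odd hd)
  · rw [show (x + p * (x + 1)) ^ 2 + d = (x ^ 2 + d) + p * ((x + 1) * (2 * x + p * (x + 1))) by
      ring]
    exact dvd_add hpx (dvd_mul_right _ _)

theorem exists_posDef_det_eq_one_represents {m N d x : ℤ} (hm : 0 < m) (hd : 0 < d)
    (hNd : N * d = m + 1) (hx : m ∣ x ^ 2 + d) :
    ∃ G : Matrix (Fin 3) (Fin 3) ℤ, G.PosDef ∧ G.det = 1 ∧ ∃ v, v ⬝ᵥ G *ᵥ v = N := by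
  obtain ⟨l, hl⟩ := hx
  have hl0 : 0 < l := by
    by_contra! h
    nlinarith [sq_nonneg x]
  have hdet : (!![l, x, 1; x, m, 0; 1, 0, N] : Matrix (Fin 3) (Fin 3) ℤ).det = 1 := by
    simp only [det_fin_three, of_apply, cons_val', cons_val_zero, cons_val_one, cons_val,
      cons_val_fin_one]
    linear_combination -N * hl + hNd
  refine ⟨!![l, x, 1; x, m, 0; 1, 0, N], posDef_fin_three_of_isSymm ?_ hl0 ?_ (by rw [hdet]; exact one_pos),
    hdet, ![0, 0, 1], ?_⟩
  · exact IsSymm.ext fun i j => by fin_cases i <;> fin_cases j <;> rfl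
  · show 0 < l * m - x ^ 2
    linarith
  · simp [dotProduct, mulVec, Fin.sum_univ_three]

theorem exists_prime_mod_four_eq_one_dvd_two_mul_add_one {N : ℕ} (hN : N % 8 = 3) :
    ∃ p : ℕ, p.Prime ∧ p % 4 = 1 ∧ N ∣ 2 * p + 1 := by
  obtain ⟨c, rfl⟩ : ∃ c, N = 2 * c + 1 := ⟨N / 2, by omega⟩
  have hcop : c.Coprime (4 * (2 * c + 1)) := by
    refine Nat.Coprime.mul_right ?_ (by simp)
    simpa using (Nat.coprime_two_right.mpr (Nat.odd_iff.mpr (by omega))).pow_right 2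
  have : NeZero (4 * (2 * c + 1)) := ⟨by omega⟩
  obtain ⟨p, -, hp, hpc⟩ :=
    Nat.forall_exists_prime_gt_and_eq_mod ((ZMod.isUnit_iff_coprime _ _).mpr hcop) 0
  have hmod := (ZMod.natCast_eq_natCast_iff _ _ _).mp hpc
  refine ⟨p, hp, ?_, ?_⟩
  · have := hmod.of_mul_right (2 * c + 1)
    unfold Nat.ModEq at this
    omega
  · have := ((hmod.of_mul_left 4).mul_left 2).add_right 1
    exact (this.dvd_iff dvd_rfl).mpr dvd_rfl

theorem isSquare_neg_of_dvd_two_mul_add_one {p N : ℕ} [Fact p.Prime] (hp : p % 4 = 1)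
    (hN : N % 8 = 3) (hNp : N ∣ 2 * p + 1) : IsSquare (-(N : ZMod p)) := by
  have hNodd : Odd N := Nat.odd_iff.mpr (by omega)
  have hpN : jacobiSym p N = 1 := by
    have h := jacobiSym.mul_left (-2) p N
    rw [jacobiSym.at_neg_two hNodd, ZMod.χ₈'_nat_eq_if_mod_eight, if_neg (by omega),
      if_pos (by omega), one_mul, jacobiSym.mod_left' (b := N) (a₂ := 1), jacobiSym.one_left] at h
    · exact h.symm
    · apply Int.ModEq.eq
      rw [Int.modEq_iff_dvd]
      have := Int.natCast_dvd_natCast.mpr hNp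
      push_cast at this
      convert this using 1
      ring
  have h : jacobiSym (-N) p = 1 := by
    rw [neg_eq_neg_one_mul, jacobiSym.mul_left, jacobiSym.at_neg_one (Nat.odd_iff.mpr (by omega)),
      ZMod.χ₄_nat_one_mod_four hp, jacobiSym.quadratic_reciprocity_one_mod_four' hNodd hp, hpN]
    rfl
  simpa using ZMod.isSquare_of_jacobiSym_eq_one h

theorem Nat.exists_sq_add_sq_add_sq_of_mod_eight_eq_three {N : ℕ} (hN : N % 8 = 3) :
    ∃ a b c : ℤ, (N : ℤ) = a ^ 2 + b ^ 2 + c ^ 2 := by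
  obtain ⟨p, hp, hp4, d, hd⟩ := exists_prime_mod_four_eq_one_dvd_two_mul_add_one hN
  have := Fact.mk hp
  have hsq : IsSquare (-((d : ℤ) : ZMod p)) := by
    refine (isSquare_neg_of_dvd_two_mul_add_one hp4 hN ⟨d, hd⟩).neg_of_mul_eq_one ?_
    have := congrArg (fun n : ℕ => (n : ZMod p)) hd
    push_cast at this ⊢
    rw [ZMod.natCast_self, mul_zero, zero_add] at this
    exact this.symm
  have hdodd : Odd d := (Nat.odd_mul.mp (hd ▸ odd_two_mul_add_one p)).2
  obtain ⟨x, hx⟩ := exists_two_mul_dvd_sq_add (Nat.odd_iff.mpr (by omega))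
    (by exact_mod_cast hdodd) hsq
  obtain ⟨G, hG, hdet, v, hv⟩ := exists_posDef_det_eq_one_represents (m := 2 * p) (N := N)
    (by have := hp.pos; omega) (by exact_mod_cast hdodd.pos) (by exact_mod_cast hd.symm) hx
  obtain ⟨a, b, c, h⟩ := hG.exists_sq_add_sq_add_sq_of_det_eq_one hdet v
  exact ⟨a, b, c, hv ▸ h⟩

theorem Int.sq_emod_eight_of_odd {t : ℤ} (ht : Odd t) : t ^ 2 % 8 = 1 := by
  obtain ⟨k, rfl⟩ := ht
  obtain ⟨j, hj⟩ := Int.even_mul_succ_self k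
  rw [show (2 * k + 1) ^ 2 = 4 * (k * (k + 1)) + 1 by ring, hj]
  omega

theorem Int.sq_emod_four_of_even {t : ℤ} (ht : Even t) : t ^ 2 % 4 = 0 := by
  obtain ⟨k, rfl⟩ := ht
  rw [show (k + k) ^ 2 = 4 * k ^ 2 by ring]
  omega

theorem Int.exists_sq_add_sq_eq_of_odd {a b : ℤ} (hb : Odd b) (hab : 8 ∣ a - b) :
    ∃ x y : ℤ, a ^ 2 + b ^ 2 = 2 * (4 * x) ^ 2 + 2 * (2 * y + 1) ^ 2 := by
  obtain ⟨x, hx⟩ := hab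
  obtain ⟨m, rfl⟩ := hb
  refine ⟨x, m + 2 * x, ?_⟩
  rw [show a = 2 * m + 1 + 8 * x by linarith]
  ring

theorem Int.exists_eq_of_sq_add_sq_add_sq_emod_eight_eq_three {a b c : ℤ}
    (h : (a ^ 2 + b ^ 2 + c ^ 2) % 8 = 3) :
    ∃ x y z : ℤ,
      a ^ 2 + b ^ 2 + c ^ 2 = 2 * (4 * x) ^ 2 + 2 * (2 * y + 1) ^ 2 + (2 * z + 1) ^ 2 := by
  have hsq (t : ℤ) : (t % 2 = 1 → t ^ 2 % 8 = 1) ∧ (t % 2 = 0 → t ^ 2 % 4 = 0) :=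
    ⟨fun h => Int.sq_emod_eight_of_odd (Int.odd_iff.mpr h),
      fun h => Int.sq_emod_four_of_even (Int.even_iff.mpr h)⟩
  have := hsq a
  have := hsq b
  have := hsq c
  have ha : Odd a := Int.odd_iff.mpr (by omega)
  have hb : Odd b := Int.odd_iff.mpr (by omega)
  have hc : Odd c := Int.odd_iff.mpr (by omega)
  have key (u v w : ℤ) (huvw : u ^ 2 + v ^ 2 + w ^ 2 = a ^ 2 + b ^ 2 + c ^ 2) (hv : Odd v)
      (hw : Odd w) (huv : 8 ∣ u - v) :
      ∃ x y z : ℤ,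
        a ^ 2 + b ^ 2 + c ^ 2 = 2 * (4 * x) ^ 2 + 2 * (2 * y + 1) ^ 2 + (2 * z + 1) ^ 2 := by
    obtain ⟨x, y, hxy⟩ := Int.exists_sq_add_sq_eq_of_odd hv huv
    obtain ⟨z, rfl⟩ := hw
    exact ⟨x, y, z, by rw [← huvw, hxy]⟩
  have : 8 ∣ a - b ∨ 8 ∣ a + b ∨ 8 ∣ a - c ∨ 8 ∣ a + c ∨ 8 ∣ b - c ∨ 8 ∣ b + c := by omega
  rcases this with h | h | h | h | h | h
  · exact key a b c rfl hb hc h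
  · exact key a (-b) c (by ring) hb.neg hc (by rwa [sub_neg_eq_add])
  · exact key a c b (by ring) hc hb h
  · exact key a (-c) b (by ring) hc.neg hb (by rwa [sub_neg_eq_add])
  · exact key b c a (by ring) hc ha h
  · exact key b (-c) a (by ring) hc.neg ha (by rwa [sub_neg_eq_add])

theorem stmt6 (n : ℕ) : ∃ x y z : ℤ,
    8 * (n : ℤ) + 3 = 2 * (4 * x) ^ 2 + 2 * (2 * y + 1) ^ 2 + (2 * z + 1) ^ 2 := by
  obtain ⟨a, b, c, h⟩ :=
    Nat.exists_sq_add_sq_add_sq_of_mod_eight_eq_three (N := 8 * n + 3) (by omega)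
  push_cast at h
  rw [h]
  exact Int.exists_eq_of_sq_add_sq_add_sq_emod_eight_eq_three (by omega)
end

section
/- Every natural number n can be written as x² + t_y + 3·t_z for some integers x, y, z, where t_k = k(k+1)/2. -/
def tri (k : ℤ) : ℤ := k * (k + 1) / 2


/-- For a > 0 and any c, we can shift c by a multiple of a into [-a/2, a/2]. -/
lemma round_lemma (a c : ℤ) (ha : 0 < a) : ∃ x : ℤ, (2*(a*x + c))^2 ≤ a^2 := by
  have h0 : 0 ≤ c % a := Int.emod_nonneg c (ne_of_gt ha)
  have h1 : c % a < a := Int.emod_lt_of_pos c ha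
  have hc : c % a = c - a * (c / a) := by rw [Int.emod_def]
  by_cases h : 2 * (c % a) ≤ a
  · refine ⟨-(c/a), ?_⟩
    have : a * -(c/a) + c = c % a := by rw [hc]; ring
    rw [this]
    nlinarith
  · refine ⟨-(c/a) - 1, ?_⟩
    have : a * (-(c/a) - 1) + c = c % a - a := by rw [hc]; ring
    rw [this]
    nlinarith

def val2 (A B C x y : ℤ) : ℤ := A*x^2 + 2*B*x*y + C*y^2

/-- Binary reduction: a positive definite binary form attains a small value at a
primitive (with explicit Bezout witnesses) vector. -/
lemma bin_min : ∀ (n : ℕ) (A B C : ℤ),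
    (∀ x y : ℤ, ¬(x = 0 ∧ y = 0) → 0 < val2 A B C x y) → A.toNat ≤ n →
    ∃ x y u v : ℤ, u*x + v*y = 1 ∧ 3 * (val2 A B C x y)^2 ≤ 4*(A*C - B^2) := by
  intro n
  induction n with
  | zero =>
    intro A B C hpd hA
    have hA0 : 0 < A := by
      have := hpd 1 0 (by simp)
      simpa [val2] using this
    omega
  | succ n ih =>
    intro A B C hpd hA
    have hA0 : 0 < A := by
      have := hpd 1 0 (by simp)
      simpa [val2] using this
    obtain ⟨k, hk⟩ := round_lemma A B hA0
    set B' := B + A*k with hB'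
    set C' := A*k^2 + 2*B*k + C with hC'
    have hsub : ∀ x y : ℤ, val2 A B' C' x y = val2 A B C (x + k*y) y := by
      intro x y; simp only [val2, hB', hC']; ring
    have hdet : A*C' - B'^2 = A*C - B^2 := by simp only [hB', hC']; ring
    have hB'sq : 4*B'^2 ≤ A^2 := by
      have : (2*(A*k+B))^2 ≤ A^2 := hk
      nlinarith [this]
    by_cases hCA : C' < A
    · -- recurse on the swapped form (C', B', A)
      have hpd' : ∀ x y : ℤ, ¬(x = 0 ∧ y = 0) → 0 < val2 C' B' A x y := by
        intro x y hxy
        have h1 : val2 C' B' A x y = val2 A B' C' y x := by simp only [val2]; ring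
        have h2 : val2 A B' C' y x = val2 A B C (y + k*x) x := hsub y x
        rw [h1, h2]
        apply hpd
        rintro ⟨hy, hx⟩
        rw [hx, mul_zero, add_zero] at hy
        exact hxy ⟨hx, hy⟩
      have hC'0 : 0 < C' := by
        have := hpd' 1 0 (by simp)
        simpa [val2] using this
      have hle : C'.toNat ≤ n := by omega
      obtain ⟨x, y, u, v, huv, hval⟩ := ih C' B' A hpd' hle
      refine ⟨y + k*x, x, v, u - v*k, by linear_combination huv, ?_⟩
      have h1 : val2 A B C (y + k*x) x = val2 C' B' A x y := by
        rw [show y + k*x = (y) + k*(x) from rfl, ← hsub y x]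
        simp only [val2]; ring
      rw [h1]
      calc 3 * val2 C' B' A x y ^ 2 ≤ 4*(C'*A - B'^2) := hval
        _ = 4*(A*C - B^2) := by rw [← hdet]; ring
    · -- reduced: return (1,0)
      refine ⟨1, 0, 1, 0, by ring, ?_⟩
      have hC'A : A ≤ C' := by omega
      have hv : val2 A B C 1 0 = A := by simp [val2]
      rw [hv, ← hdet]
      nlinarith

open Matrix

def Q3 (M : Matrix (Fin 3) (Fin 3) ℤ) (x y z : ℤ) : ℤ := ![x,y,z] ⬝ᵥ (M *ᵥ ![x,y,z])

def PD3 (M : Matrix (Fin 3) (Fin 3) ℤ) : Prop :=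
  ∀ x y z : ℤ, ¬(x = 0 ∧ y = 0 ∧ z = 0) → 0 < Q3 M x y z

lemma Q3_expand (M : Matrix (Fin 3) (Fin 3) ℤ) (x y z : ℤ) :
    Q3 M x y z = M 0 0*x^2 + M 1 1*y^2 + M 2 2*z^2 + (M 0 1 + M 1 0)*x*y
      + (M 0 2 + M 2 0)*x*z + (M 1 2 + M 2 1)*y*z := by
  simp [Q3, Matrix.mulVec, dotProduct, Fin.sum_univ_three]
  ring

lemma Q3_e1 (M : Matrix (Fin 3) (Fin 3) ℤ) : Q3 M 1 0 0 = M 0 0 := by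
  rw [Q3_expand]; ring

lemma Q3_conj (U M : Matrix (Fin 3) (Fin 3) ℤ) (x y z : ℤ) :
    Q3 (Uᵀ * M * U) x y z
      = Q3 M ((U *ᵥ ![x,y,z]) 0) ((U *ᵥ ![x,y,z]) 1) ((U *ᵥ ![x,y,z]) 2) := by
  simp [Q3, Matrix.mulVec, dotProduct, Matrix.mul_apply, Fin.sum_univ_three,
    Matrix.transpose_apply]
  ring

lemma conj00 (U M : Matrix (Fin 3) (Fin 3) ℤ) :
    (Uᵀ * M * U) 0 0 = Q3 M (U 0 0) (U 1 0) (U 2 0) := by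
  simp [Q3, Matrix.mulVec, dotProduct, Matrix.mul_apply, Fin.sum_univ_three,
    Matrix.transpose_apply]
  ring

lemma mulVec_ne_zero (U : Matrix (Fin 3) (Fin 3) ℤ) (hU : U.det = 1) (v : Fin 3 → ℤ)
    (hv : ¬(v 0 = 0 ∧ v 1 = 0 ∧ v 2 = 0)) :
    ¬((U *ᵥ v) 0 = 0 ∧ (U *ᵥ v) 1 = 0 ∧ (U *ᵥ v) 2 = 0) := by
  rintro ⟨h0, h1, h2⟩
  have hUv : U *ᵥ v = 0 := by
    funext i; fin_cases i <;> assumption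
  have hadj : U.adjugate * U = 1 := by rw [Matrix.adjugate_mul, hU, one_smul]
  have : v = 0 := by
    calc v = (1 : Matrix (Fin 3) (Fin 3) ℤ) *ᵥ v := by rw [Matrix.one_mulVec]
      _ = U.adjugate *ᵥ (U *ᵥ v) := by rw [Matrix.mulVec_mulVec, hadj]
      _ = 0 := by rw [hUv, Matrix.mulVec_zero]
  exact hv ⟨by rw [this]; rfl, by rw [this]; rfl, by rw [this]; rfl⟩

lemma conj_PtP {n : ℕ} (U M : Matrix (Fin n) (Fin n) ℤ) (hU : U.det = 1)
    (h : ∃ P, Uᵀ * M * U = Pᵀ * P) : ∃ P, M = Pᵀ * P := by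
  obtain ⟨P, hP⟩ := h
  have h1 : U * U.adjugate = 1 := by rw [Matrix.mul_adjugate, hU, one_smul]
  have h2 : U.adjugateᵀ * Uᵀ = 1 := by rw [← Matrix.transpose_mul, h1, Matrix.transpose_one]
  refine ⟨P * U.adjugate, ?_⟩
  calc M = (U.adjugateᵀ * Uᵀ) * M * (U * U.adjugate) := by rw [h2, h1]; simp
    _ = U.adjugateᵀ * (Uᵀ * M * U) * U.adjugate := by simp only [Matrix.mul_assoc]
    _ = U.adjugateᵀ * (Pᵀ * P) * U.adjugate := by rw [hP]
    _ = (P * U.adjugate)ᵀ * (P * U.adjugate) := by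
        rw [Matrix.transpose_mul]; simp only [Matrix.mul_assoc]

lemma conj00_2 (U G : Matrix (Fin 2) (Fin 2) ℤ) :
    (Uᵀ * G * U) 0 0 = val2 (G 0 0) (G 0 1) (G 1 1) (U 0 0) (U 1 0)
      + (G 1 0 - G 0 1) * (U 1 0 * U 0 0) := by
  simp [val2, Matrix.mul_apply, Fin.sum_univ_two, Matrix.transpose_apply]
  ring

lemma bin_PtP (A B C : ℤ)
    (hpd : ∀ x y : ℤ, ¬(x = 0 ∧ y = 0) → 0 < val2 A B C x y)
    (hdet : A*C - B^2 = 1) :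
    ∃ p q r s : ℤ, A = p^2 + r^2 ∧ B = p*q + r*s ∧ C = q^2 + s^2 := by
  obtain ⟨x, y, u, v, huv, hval⟩ := bin_min A.toNat A B C hpd le_rfl
  rw [hdet] at hval
  have hxy : ¬(x = 0 ∧ y = 0) := by
    rintro ⟨hx, hy⟩; rw [hx, hy] at huv; simp at huv
  have hV1 : 0 < val2 A B C x y := hpd x y hxy
  have hV : val2 A B C x y = 1 := by nlinarith
  -- conjugate G by U₂ = !![x, -v; y, u]
  set G : Matrix (Fin 2) (Fin 2) ℤ := !![A, B; B, C] with hG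
  set U₂ : Matrix (Fin 2) (Fin 2) ℤ := !![x, -v; y, u] with hU₂
  have hU₂det : U₂.det = 1 := by
    rw [Matrix.det_fin_two]; simp [hU₂]; linear_combination huv
  set G' := U₂ᵀ * G * U₂ with hG'
  have hG'00 : G' 0 0 = 1 := by
    rw [hG', conj00_2]
    simp [hG, hU₂]
    exact hV
  have hGsym : Gᵀ = G := by
    ext i j; fin_cases i <;> fin_cases j <;> simp [hG]
  have hG'symm : G'ᵀ = G' := by
    rw [hG', Matrix.transpose_mul, Matrix.transpose_mul, Matrix.transpose_transpose, hGsym,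
      Matrix.mul_assoc]
  have hG'sym : G' 1 0 = G' 0 1 := by
    have h := congrFun (congrFun hG'symm 1) 0
    rw [Matrix.transpose_apply] at h
    exact h.symm
  set B' := G' 0 1 with hB'
  have hdetG : G.det = 1 := by
    rw [Matrix.det_fin_two]; simp [hG]; linear_combination hdet
  have hdetG' : G'.det = 1 := by
    rw [hG', Matrix.det_mul, Matrix.det_mul, Matrix.det_transpose, hU₂det, hdetG]; ring
  have hG'11 : G' 1 1 = 1 + B'^2 := by
    have h2 := Matrix.det_fin_two G'
    rw [hdetG'] at h2
    rw [hG'00, hG'sym] at h2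
    linear_combination -h2
  have hTt : (!![1, B'; 0, 1] : Matrix (Fin 2) (Fin 2) ℤ)ᵀ = !![1, 0; B', 1] := by
    ext i j; fin_cases i <;> fin_cases j <;> rfl
  have hprod : (!![1, 0; B', 1] : Matrix (Fin 2) (Fin 2) ℤ) * !![1, B'; 0, 1]
      = !![1, B'; B', B'*B' + 1] := by
    ext i j; fin_cases i <;> fin_cases j <;>
      simp [Matrix.mul_apply, Fin.sum_univ_two]
  have hG'eq : U₂ᵀ * G * U₂ = (!![1, B'; 0, 1])ᵀ * !![1, B'; 0, 1] := by
    rw [hTt, hprod, ← hG']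
    ext i j
    fin_cases i <;> fin_cases j
    · simpa using hG'00
    · simpa using hB'.symm
    · simpa using hG'sym
    · simpa using hG'11.trans (by ring)
  obtain ⟨W, hW⟩ := conj_PtP U₂ G hU₂det ⟨!![1, B'; 0, 1], hG'eq⟩
  refine ⟨W 0 0, W 0 1, W 1 0, W 1 1, ?_, ?_, ?_⟩
  · have h := congrFun (congrFun hW 0) 0
    simp [hG, Matrix.mul_apply, Fin.sum_univ_two, Matrix.transpose_apply] at h
    linear_combination h
  · have h := congrFun (congrFun hW 0) 1
    simp [hG, Matrix.mul_apply, Fin.sum_univ_two, Matrix.transpose_apply] at h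
    linear_combination h
  · have h := congrFun (congrFun hW 1) 1
    simp [hG, Matrix.mul_apply, Fin.sum_univ_two, Matrix.transpose_apply] at h
    linear_combination h

lemma descent_ineq (a a' s V : ℤ) (ha2 : 2 ≤ a) (hs : (2*s)^2 ≤ a^2) (hval : 3*V^2 ≤ 4*a)
    (hV1 : 0 < V) (hI : a * a' = s^2 + V) (hcon : a ≤ a') : False := by
  have hs' : 4*s^2 ≤ a^2 := by nlinarith [hs]
  have ha : (0:ℤ) < a := by linarith
  have haa' : a*a ≤ a*a' := by nlinarith [mul_nonneg ha.le (sub_nonneg.mpr hcon)]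
  have h3a : 3*(a*a) ≤ 4*V := by nlinarith [hI, hs', haa']
  have h9 : 9*(a*a)*(a*a) ≤ 16*V^2 := by nlinarith [h3a, hV1, mul_pos ha ha]
  have h27 : 27*(a*a*a) ≤ 64 := by nlinarith [h9, hval, ha]
  nlinarith [ha2, h27, mul_nonneg (sub_nonneg.mpr ha2) (by nlinarith [ha2] : (0:ℤ) ≤ a^2 + 2*a + 4)]

lemma tern_PtP : ∀ (n : ℕ) (M : Matrix (Fin 3) (Fin 3) ℤ),
    Mᵀ = M → PD3 M → M.det = 1 → (M 0 0).toNat ≤ n → ∃ P, M = Pᵀ * P := by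
  intro n
  induction n with
  | zero =>
    intro M hsym hpd hdet hn
    have ha : 0 < M 0 0 := by
      have := hpd 1 0 0 (by simp)
      rwa [Q3_e1] at this
    omega
  | succ n ih =>
    intro M hsym hpd hdet hn
    have h10 : M 1 0 = M 0 1 := by
      have h := congrFun (congrFun hsym 1) 0
      rw [Matrix.transpose_apply] at h; exact h.symm
    have h20 : M 2 0 = M 0 2 := by
      have h := congrFun (congrFun hsym 2) 0
      rw [Matrix.transpose_apply] at h; exact h.symm
    have h21 : M 2 1 = M 1 2 := by
      have h := congrFun (congrFun hsym 2) 1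
      rw [Matrix.transpose_apply] at h; exact h.symm
    set a := M 0 0 with ha'
    set b := M 1 1 with hb'
    set c := M 2 2 with hc'
    set d := M 0 1 with hd'
    set e := M 0 2 with he'
    set f := M 1 2 with hf'
    have ha : 0 < a := by
      have := hpd 1 0 0 (by simp)
      rwa [Q3_e1] at this
    have hQ : ∀ x y z : ℤ, Q3 M x y z
        = a*x^2 + b*y^2 + c*z^2 + 2*d*x*y + 2*e*x*z + 2*f*y*z := by
      intro x y z
      rw [Q3_expand, h10, h20, h21, ← ha', ← hb', ← hc', ← hd', ← he', ← hf']
      ring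
    -- the determinant in entries
    have hdet3 : a*(b*c - f*f) - d*(d*c - f*e) + e*(d*f - b*e) = 1 := by
      rw [← hdet, Matrix.det_fin_three, h10, h20, h21, ← ha', ← hb', ← hc', ← hd', ← he',
        ← hf']
      ring
    set Ag := a*b - d^2 with hAg
    set Bg := a*f - d*e with hBg
    set Cg := a*c - e^2 with hCg
    have I1 : ∀ x y z : ℤ, a * Q3 M x y z = (a*x + d*y + e*z)^2 + val2 Ag Bg Cg y z := by
      intro x y z
      rw [hQ]; simp only [val2, hAg, hBg, hCg]; ring
    have hdet2 : Ag*Cg - Bg^2 = a := by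
      simp only [hAg, hBg, hCg]
      linear_combination a * hdet3
    have hpd2 : ∀ y z : ℤ, ¬(y = 0 ∧ z = 0) → 0 < val2 Ag Bg Cg y z := by
      intro y z hyz
      have hv : 0 < Q3 M (-(d*y+e*z)) (a*y) (a*z) := by
        apply hpd
        rintro ⟨h1, h2, h3⟩
        apply hyz
        constructor
        · rcases mul_eq_zero.mp h2 with h | h
          · omega
          · exact h
        · rcases mul_eq_zero.mp h3 with h | h
          · omega
          · exact h
      have hI := I1 (-(d*y+e*z)) (a*y) (a*z)
      have hscale : val2 Ag Bg Cg (a*y) (a*z) = a^2 * val2 Ag Bg Cg y z := by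
        simp only [val2]; ring
      rw [hscale] at hI
      have hzero : (a*(-(d*y+e*z)) + d*(a*y) + e*(a*z)) = 0 := by ring
      rw [hzero] at hI
      nlinarith [hv, ha]
    by_cases haone : a = 1
    · -- base case: split off the binary part
      have hdet2' : Ag*Cg - Bg^2 = 1 := by rw [hdet2, haone]
      obtain ⟨p, q, r, s, hA, hB, hC⟩ := bin_PtP Ag Bg Cg hpd2 hdet2'
      have hAg1 : b = d^2 + (p^2 + r^2) := by rw [← hA, hAg, haone]; ring
      have hBg1 : f = d*e + (p*q + r*s) := by rw [← hB, hBg, haone]; ring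
      have hCg1 : c = e^2 + (q^2 + s^2) := by rw [← hC, hCg, haone]; ring
      have hMlit : M = !![a, d, e; d, b, f; e, f, c] := by
        ext i j
        fin_cases i <;> fin_cases j <;>
          simp [Matrix.vecHead, Matrix.vecTail] <;>
          first
            | exact ha'.symm | exact hd'.symm | exact he'.symm | exact h10
            | exact hb'.symm | exact hf'.symm | exact h20 | exact h21 | exact hc'.symm
      refine ⟨!![1, d, e; 0, p, q; 0, r, s], ?_⟩
      have hTrans : (!![1, d, e; 0, p, q; 0, r, s] : Matrix (Fin 3) (Fin 3) ℤ)ᵀ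
          = !![1, 0, 0; d, p, r; e, q, s] := by
        ext i j; fin_cases i <;> fin_cases j <;> rfl
      have hprod : (!![1, 0, 0; d, p, r; e, q, s] : Matrix (Fin 3) (Fin 3) ℤ)
            * !![1, d, e; 0, p, q; 0, r, s]
          = !![1, d, e; d, d*d+p*p+r*r, d*e+p*q+r*s; e, e*d+q*p+s*r, e*e+q*q+s*s] := by
        ext i j
        fin_cases i <;> fin_cases j <;>
          simp [Matrix.mul_apply, Fin.sum_univ_three, Matrix.vecHead, Matrix.vecTail]
      rw [hTrans, hprod, hMlit]
      ext i j
      fin_cases i <;> fin_cases j <;>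
        simp [Matrix.vecHead, Matrix.vecTail] <;>
        first
          | linear_combination haone | linear_combination hAg1
          | linear_combination hBg1 | linear_combination hCg1
    · -- descent step
      have ha2 : 2 ≤ a := by omega
      obtain ⟨y₁, y₂, u, v, huv, hval⟩ := bin_min Ag.toNat Ag Bg Cg hpd2 le_rfl
      rw [hdet2] at hval
      have hy12 : ¬(y₁ = 0 ∧ y₂ = 0) := by
        rintro ⟨h1, h2⟩; rw [h1, h2] at huv; simp at huv
      set V := val2 Ag Bg Cg y₁ y₂ with hV'
      have hV1 : 0 < V := hpd2 y₁ y₂ hy12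
      obtain ⟨x, hx⟩ := round_lemma a (d*y₁ + e*y₂) ha
      set a' := Q3 M x y₁ y₂ with ha''
      have hI := I1 x y₁ y₂
      have ha'1 : 0 < a' := hpd x y₁ y₂ (by rintro ⟨h1, h2, h3⟩; exact hy12 ⟨h2, h3⟩)
      have ha'a : a' < a := by
        by_contra hcon
        push_neg at hcon
        exact descent_ineq a a' (a*x + (d*y₁ + e*y₂)) V ha2 hx hval hV1
          (by rw [ha'']; linear_combination I1 x y₁ y₂) hcon
      set U : Matrix (Fin 3) (Fin 3) ℤ := !![x, -1, 0; y₁, 0, -v; y₂, 0, u] with hU'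
      have hUdet : U.det = 1 := by
        rw [Matrix.det_fin_three]
        simp [hU', Matrix.vecHead, Matrix.vecTail]
        linear_combination huv
      set M' := Uᵀ * M * U with hM''
      have hM'sym : M'ᵀ = M' := by
        rw [hM'', Matrix.transpose_mul, Matrix.transpose_mul, Matrix.transpose_transpose,
          hsym, Matrix.mul_assoc]
      have hM'00 : M' 0 0 = a' := by
        rw [hM'', conj00, ha'']
        have hU00 : U 0 0 = x := rfl
        have hU10 : U 1 0 = y₁ := rfl
        have hU20 : U 2 0 = y₂ := rfl
        rw [hU00, hU10, hU20]
      have hM'pd : PD3 M' := by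
        intro x' y' z' hxyz
        rw [hM'', Q3_conj]
        apply hpd
        exact mulVec_ne_zero U hUdet ![x', y', z'] (by simpa using hxyz)
      have hM'det : M'.det = 1 := by
        rw [hM'', Matrix.det_mul, Matrix.det_mul, Matrix.det_transpose, hUdet, hdet]; ring
      have hfuel : (M' 0 0).toNat ≤ n := by rw [hM'00]; omega
      obtain ⟨P, hP⟩ := ih M' hM'sym hM'pd hM'det hfuel
      exact conj_PtP U M hUdet ⟨P, by rw [← hM'', hP]⟩

lemma jacobi_neg_N (p N' : ℕ) [Fact p.Prime] (hN'odd : N' % 2 = 1)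
    (hdvd : N' ∣ p + 1) (hp4 : p % 4 = 1)
    (hcases : (N' % 4 = 1 ∧ p % 8 = 1) ∨ (N' % 4 = 3 ∧ p % 8 = 5)) :
    jacobiSym (-(2 * N' : ℕ) : ℤ) p = 1 := by
  have hpodd : Odd p := by
    rcases hcases with ⟨_, h⟩ | ⟨_, h⟩ <;> exact Nat.odd_iff.mpr (by omega)
  have hN'odd' : Odd N' := Nat.odd_iff.mpr hN'odd
  have hsplit : (-(2 * N' : ℕ) : ℤ) = (-1) * (2 * (N' : ℤ)) := by push_cast; ring
  rw [hsplit, jacobiSym.mul_left, jacobiSym.mul_left]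
  have h1 : jacobiSym (-1 : ℤ) p = 1 := by
    rw [jacobiSym.at_neg_one hpodd, ZMod.χ₄_nat_one_mod_four hp4]
  have h2 : jacobiSym (2 : ℤ) p = if p % 8 = 1 then 1 else -1 := by
    rw [jacobiSym.at_two hpodd, ZMod.χ₈_nat_eq_if_mod_eight]
    rcases hcases with ⟨_, h⟩ | ⟨_, h⟩ <;> simp [h] <;> omega
  have hrecip : jacobiSym (N' : ℤ) p = jacobiSym (p : ℤ) N' :=
    (jacobiSym.quadratic_reciprocity_one_mod_four hp4 hN'odd').symm
  have hmod : jacobiSym (p : ℤ) N' = jacobiSym (-1 : ℤ) N' := by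
    apply jacobiSym.mod_left'
    have hdd : (N' : ℤ) ∣ (-1) - (p : ℤ) := by
      have h' : (N' : ℤ) ∣ (p : ℤ) + 1 := by exact_mod_cast Int.natCast_dvd_natCast.mpr hdvd
      have : (-1 : ℤ) - (p : ℤ) = -((p:ℤ) + 1) := by ring
      rw [this]
      exact dvd_neg.mpr h'
    exact Int.modEq_iff_dvd.mpr hdd
  have h3 : jacobiSym (-1 : ℤ) N' = if N' % 4 = 1 then 1 else -1 := by
    rw [jacobiSym.at_neg_one hN'odd']
    rcases hcases with ⟨h, _⟩ | ⟨h, _⟩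
    · simp [h, ZMod.χ₄_nat_one_mod_four h]
    · simp [ZMod.χ₄_nat_three_mod_four h, h]
  rw [h1, h2, hrecip, hmod, h3]
  rcases hcases with ⟨h, h'⟩ | ⟨h, h'⟩ <;> simp [h, h']

theorem sum_three_squares (N : ℕ) (hN : N % 4 = 2) :
    ∃ a b c : ℤ, (N : ℤ) = a^2 + b^2 + c^2 := by
  set N' := N / 2 with hN'def
  have hNeven : N = 2 * N' := by omega
  have hN'odd : N' % 2 = 1 := by omega
  have hN'pos : 0 < N' := by omega
  have hcop : Nat.Coprime 8 N' := by
    have h2 : Nat.Coprime 2 N' := Nat.coprime_two_left.mpr (Nat.odd_iff.mpr hN'odd)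
    have h8 : (8 : ℕ) = 2^3 := rfl
    rw [h8]
    exact Nat.Coprime.pow_left 3 h2
  haveI : NeZero N' := ⟨by omega⟩
  haveI : NeZero (8 * N') := ⟨by positivity⟩
  set E := ZMod.chineseRemainder hcop with hE
  -- the residue mod 8
  set t : ℕ := if N' % 4 = 1 then 1 else 5 with ht
  have htval : (N' % 4 = 1 ∧ t = 1) ∨ (N' % 4 = 3 ∧ t = 5) := by
    by_cases h1 : N' % 4 = 1
    · exact Or.inl ⟨h1, by rw [ht]; simp [h1]⟩
    · exact Or.inr ⟨by omega, by rw [ht]; simp [h1]⟩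
  have htunit : IsUnit ((t : ℕ) : ZMod 8) := by
    rcases htval with ⟨_, h⟩ | ⟨_, h⟩ <;> rw [h] <;> decide
  have hrunit : IsUnit (E.symm (((t : ℕ) : ZMod 8), (-1 : ZMod N'))) := by
    apply IsUnit.map E.symm
    obtain ⟨w, hw⟩ := htunit.exists_right_inv
    exact isUnit_iff_exists_inv.mpr ⟨(w, -1), by rw [Prod.mk_mul_mk, hw]; norm_num⟩
  obtain ⟨p, hpgt, hpprime, hpr⟩ :=
    Nat.forall_exists_prime_gt_and_eq_mod hrunit (8 * N' + 8)
  haveI : Fact p.Prime := ⟨hpprime⟩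
  -- extract the two congruences
  have hEp : E ((p : ZMod (8 * N'))) = ((p : ZMod 8), (p : ZMod N')) := by
    rw [map_natCast E p]; rfl
  have hpair : ((p : ZMod 8), (p : ZMod N')) = (((t : ℕ) : ZMod 8), (-1 : ZMod N')) := by
    rw [← hEp, hpr, RingEquiv.apply_symm_apply]
  have hp8 : p % 8 = t := by
    have h8 := (Prod.mk.injEq _ _ _ _).mp hpair |>.1
    have := (ZMod.natCast_eq_natCast_iff p t 8).mp h8
    unfold Nat.ModEq at this
    have ht8 : t < 8 := by rcases htval with ⟨_, h⟩ | ⟨_, h⟩ <;> omega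
    omega
  have hpm : (p : ZMod N') = -1 := (Prod.mk.injEq _ _ _ _).mp hpair |>.2
  have hdvdN' : N' ∣ p + 1 := by
    have : ((p + 1 : ℕ) : ZMod N') = 0 := by push_cast [hpm]; ring
    exact (ZMod.natCast_eq_zero_iff _ _).mp this
  have hp4 : p % 4 = 1 := by
    rcases htval with ⟨_, h⟩ | ⟨_, h⟩ <;> rw [h] at hp8 <;> omega
  have hpodd : p % 2 = 1 := by omega
  have hdvdN : N ∣ p + 1 := by
    rw [hNeven]
    refine Nat.Coprime.mul_dvd_of_dvd_of_dvd ?_ (by omega) hdvdN'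
    exact Nat.coprime_two_left.mpr (Nat.odd_iff.mpr hN'odd)
  set D := (p + 1) / N with hDdef
  have hND : N * D = p + 1 := Nat.mul_div_cancel' hdvdN
  have hDpos : 0 < D := by
    rcases Nat.eq_zero_or_pos D with h | h
    · rw [h, Nat.mul_zero] at hND; omega
    · exact h
  -- N' % 4 cases
  have hcases : (N' % 4 = 1 ∧ p % 8 = 1) ∨ (N' % 4 = 3 ∧ p % 8 = 5) := by
    rcases htval with ⟨h1, h2⟩ | ⟨h1, h2⟩ <;> rw [h2] at hp8
    · exact Or.inl ⟨h1, hp8⟩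
    · exact Or.inr ⟨h1, hp8⟩
  have hJN : jacobiSym (-(2 * N' : ℕ) : ℤ) p = 1 :=
    jacobi_neg_N p N' hN'odd hdvdN' hp4 hcases
  -- deduce J(-D | p) = 1
  have hJprod : jacobiSym (-(D : ℕ) : ℤ) p * jacobiSym (-(2 * N' : ℕ) : ℤ) p = 1 := by
    rw [← jacobiSym.mul_left]
    have hEq : (-(D : ℕ) : ℤ) * (-(2 * N' : ℕ) : ℤ) = ((p : ℤ) + 1) := by
      push_cast
      have : (2 : ℤ) * N' * D = (p : ℤ) + 1 := by exact_mod_cast congrArg (Nat.cast : ℕ → ℤ) (hNeven ▸ hND)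
      linear_combination this
    rw [hEq]
    have : ((p : ℤ) + 1) % p = 1 % p := by
      simp [Int.add_mul_emod_self_left]
    calc jacobiSym ((p:ℤ) + 1) p = jacobiSym 1 p := jacobiSym.mod_left' this
      _ = 1 := jacobiSym.one_left p
  have hJD : jacobiSym (-(D : ℕ) : ℤ) p = 1 := by
    rw [hJN, mul_one] at hJprod
    exact hJprod
  -- get b with p ∣ b² + D
  have hsq : IsSquare ((-(D : ℕ) : ℤ) : ZMod p) := ZMod.isSquare_of_jacobiSym_eq_one hJD
  obtain ⟨z, hz⟩ := hsq
  set b : ℤ := (z.val : ℤ) with hbdef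
  have hbz : ((b : ℤ) : ZMod p) = z := by
    rw [hbdef]
    push_cast
    simp [ZMod.natCast_val, ZMod.cast_id]
  have hpdvd : (p : ℤ) ∣ b^2 + D := by
    have : ((b^2 + (D:ℕ) : ℤ) : ZMod p) = 0 := by
      push_cast [hbz]
      rw [show (z:ZMod p)^2 = z * z from sq z, ← hz]
      push_cast
      ring
    exact_mod_cast (ZMod.intCast_zmod_eq_zero_iff_dvd _ p).mp this
  obtain ⟨d, hd⟩ := hpdvd
  -- build the matrix
  set M : Matrix (Fin 3) (Fin 3) ℤ := !![(p:ℤ), b, 0; b, d, 1; 0, 1, (N:ℤ)] with hM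
  have hsym : Mᵀ = M := by
    rw [hM]; ext i j; fin_cases i <;> fin_cases j <;> rfl
  have hNDZ : (N : ℤ) * (D : ℕ) = (p : ℤ) + 1 := by exact_mod_cast congrArg (Nat.cast : ℕ → ℤ) hND
  have hdZ : (p : ℤ) * d = b^2 + (D : ℕ) := hd.symm
  have hdet : M.det = 1 := by
    rw [hM, Matrix.det_fin_three]
    simp [Matrix.vecHead, Matrix.vecTail]
    linear_combination (N : ℤ) * hdZ + hNDZ
  have hppos : (0:ℤ) < (p : ℤ) := by exact_mod_cast hpprime.pos
  have hDposZ : (0:ℤ) < ((D:ℕ) : ℤ) := by exact_mod_cast hDpos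
  have hpd : PD3 M := by
    intro x y z hxyz
    have hQv : Q3 M x y z = (p:ℤ)*x^2 + d*y^2 + (N:ℤ)*z^2 + 2*b*x*y + 2*y*z := by
      have e00 : M 0 0 = (p:ℤ) := rfl
      have e11 : M 1 1 = d := rfl
      have e22 : M 2 2 = (N:ℤ) := rfl
      have e01 : M 0 1 = b := rfl
      have e10 : M 1 0 = b := rfl
      have e02 : M 0 2 = 0 := rfl
      have e20 : M 2 0 = 0 := rfl
      have e12 : M 1 2 = 1 := rfl
      have e21 : M 2 1 = 1 := rfl
      rw [Q3_expand, e00, e11, e22, e01, e10, e02, e20, e12, e21]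
      ring
    have key : ((D:ℕ):ℤ) * ((p:ℤ) * Q3 M x y z)
        = ((D:ℕ):ℤ)*((p:ℤ)*x + b*y)^2 + (((D:ℕ):ℤ)*y + (p:ℤ)*z)^2 + (p:ℤ)*z^2 := by
      rw [hQv]
      linear_combination (((D:ℕ):ℤ) * y^2) * hdZ + ((p:ℤ) * z^2) * hNDZ
    by_contra hQle
    push_neg at hQle
    have h1 : (p:ℤ) * Q3 M x y z ≤ 0 := mul_nonpos_of_nonneg_of_nonpos hppos.le hQle
    have h2 : ((D:ℕ):ℤ) * ((p:ℤ) * Q3 M x y z) ≤ 0 :=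
      mul_nonpos_of_nonneg_of_nonpos hDposZ.le h1
    rw [key] at h2
    have t1 : (0:ℤ) ≤ ((D:ℕ):ℤ)*((p:ℤ)*x + b*y)^2 := mul_nonneg hDposZ.le (sq_nonneg _)
    have t2 : (0:ℤ) ≤ (((D:ℕ):ℤ)*y + (p:ℤ)*z)^2 := sq_nonneg _
    have t3 : (0:ℤ) ≤ (p:ℤ)*z^2 := mul_nonneg hppos.le (sq_nonneg _)
    have hz2 : (p:ℤ)*z^2 = 0 := le_antisymm (by linarith) t3
    have hz0 : z = 0 := by
      rcases mul_eq_zero.mp hz2 with h | h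
      · exact absurd h (by positivity)
      · exact pow_eq_zero_iff (n := 2) (by norm_num) |>.mp h
    subst hz0
    have hy2 : (((D:ℕ):ℤ)*y + (p:ℤ)*0)^2 = 0 := le_antisymm (by linarith) t2
    have hy0 : y = 0 := by
      have := pow_eq_zero_iff (n := 2) (by norm_num) |>.mp hy2
      simp at this
      rcases this with h | h
      · exact absurd h (by omega)
      · exact h
    subst hy0
    have hx2 : ((D:ℕ):ℤ)*((p:ℤ)*x + b*0)^2 = 0 := le_antisymm (by linarith) t1
    have hx0 : x = 0 := by
      rcases mul_eq_zero.mp hx2 with h | h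
      · exact absurd h (by positivity)
      · have := pow_eq_zero_iff (n := 2) (by norm_num) |>.mp h
        simp at this
        rcases this with h' | h'
        · exact absurd h' hpprime.pos.ne'
        · exact h'
    exact hxyz ⟨hx0, rfl, rfl⟩
  obtain ⟨P, hP⟩ := tern_PtP (M 0 0).toNat M hsym hpd hdet le_rfl
  refine ⟨P 0 2, P 1 2, P 2 2, ?_⟩
  have h22 := congrFun (congrFun hP 2) 2
  have hM22 : M 2 2 = (N : ℤ) := by rw [hM]; rfl
  rw [hM22] at h22
  rw [h22]
  simp [Matrix.mul_apply, Fin.sum_univ_three, Matrix.transpose_apply]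
  ring


lemma sq_mod4 (a : ℤ) : (Even a ∧ a^2 % 4 = 0) ∨ (Odd a ∧ a^2 % 4 = 1) := by
  rcases Int.even_or_odd a with h | h
  · obtain ⟨k, hk⟩ := h
    left
    refine ⟨⟨k, hk⟩, ?_⟩
    have : a^2 = 4*k^2 := by rw [hk]; ring
    omega
  · obtain ⟨k, hk⟩ := h
    right
    refine ⟨⟨k, hk⟩, ?_⟩
    have : a^2 = 4*(k^2+k) + 1 := by rw [hk]; ring
    omega

lemma parity_perm (a b c S : ℤ) (hS : a^2+b^2+c^2 = S) (h4 : S % 4 = 2) :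
    ∃ a' b' c' : ℤ, a'^2+b'^2+c'^2 = S ∧ Odd a' ∧ Odd b' ∧ Even c' := by
  rcases sq_mod4 a with ⟨ha, ha4⟩ | ⟨ha, ha4⟩ <;>
    rcases sq_mod4 b with ⟨hb, hb4⟩ | ⟨hb, hb4⟩ <;>
    rcases sq_mod4 c with ⟨hc, hc4⟩ | ⟨hc, hc4⟩
  · omega
  · omega
  · omega
  · exact ⟨b, c, a, by linarith, hb, hc, ha⟩
  · omega
  · exact ⟨a, c, b, by linarith, ha, hc, hb⟩
  · exact ⟨a, b, c, hS, ha, hb, hc⟩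
  · omega


theorem odd_123 (m : ℕ) (hm : m % 2 = 1) :
    ∃ x y z : ℤ, (m : ℤ) = x^2 + 2*y^2 + 3*z^2 := by
  by_cases h3 : m % 3 = 0
  · -- case 3 ∣ m
    have hm₃odd : (m / 3) % 2 = 1 := by omega
    have hN4 : (2 * (m / 3)) % 4 = 2 := by omega
    obtain ⟨α, β, γ, hS⟩ := sum_three_squares (2 * (m / 3)) hN4
    have hS' : α^2 + β^2 + γ^2 = 2*((m/3 : ℕ) : ℤ) := by push_cast at hS ⊢; linarith
    have h4 : (2*((m/3 : ℕ) : ℤ)) % 4 = 2 := by omega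
    obtain ⟨b0, g0, a0, hsum, hoddβ, hoddγ, hevenα⟩ := parity_perm α β γ _ hS' h4
    obtain ⟨α₁, hα₁⟩ := hevenα
    obtain ⟨kβ, hkβ⟩ := hoddβ
    obtain ⟨kγ, hkγ⟩ := hoddγ
    have hm' : (m : ℤ) = 3*((m/3 : ℕ) : ℤ) := by
      have : m = 3 * (m/3) := by omega
      exact_mod_cast congrArg (Nat.cast : ℕ → ℤ) this
    refine ⟨a0 + (kγ - kβ), α₁ - (kγ - kβ), -(b0 + (kγ - kβ)), ?_⟩
    have h2 : (2:ℤ) * (m:ℤ) = 2 * ((a0 + (kγ - kβ))^2 + 2*(α₁ - (kγ - kβ))^2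
        + 3*(-(b0 + (kγ - kβ)))^2) := by
      subst hα₁ hkβ hkγ
      linear_combination 2*hm' - 3*hsum
    exact mul_left_cancel₀ (by norm_num) h2
  · -- case 3 ∤ m
    have hN4 : (6 * m) % 4 = 2 := by omega
    obtain ⟨a, b, c, hS⟩ := sum_three_squares (6 * m) hN4
    have hS' : a^2 + b^2 + c^2 = 6*(m : ℤ) := by push_cast at hS ⊢; linarith
    have h4 : (6*(m : ℤ)) % 4 = 2 := by omega
    obtain ⟨a0, b0, c0, hsum, hodda, hoddb, hevenc⟩ := parity_perm a b c _ hS' h4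
    have hsum3 : ((a0 : ZMod 3))^2 + ((b0 : ZMod 3))^2 + ((c0 : ZMod 3))^2 = 0 := by
      have hc := congrArg (fun t : ℤ => (t : ZMod 3)) hsum
      push_cast at hc
      rw [hc, show (6 : ZMod 3) = 0 from by decide, zero_mul]
    have dec1 : ∀ u v w : ZMod 3, u^2+v^2+w^2 = 0 →
        (u = 0 ∧ v = 0 ∧ w = 0) ∨ (u ≠ 0 ∧ v ≠ 0 ∧ w ≠ 0) := by decide
    rcases dec1 _ _ _ hsum3 with ⟨h1, h2, h3c⟩ | ⟨h1, h2, h3c⟩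
    · exfalso
      obtain ⟨a1, ha1⟩ := (ZMod.intCast_zmod_eq_zero_iff_dvd a0 3).mp h1
      obtain ⟨b1, hb1⟩ := (ZMod.intCast_zmod_eq_zero_iff_dvd b0 3).mp h2
      obtain ⟨c1, hc1⟩ := (ZMod.intCast_zmod_eq_zero_iff_dvd c0 3).mp h3c
      have h9 : 9*(a1^2+b1^2+c1^2) = 6*(m:ℤ) := by
        rw [← hsum, ha1, hb1, hc1]; ring
      have h3m : (3:ℤ) ∣ (m:ℤ) := by omega
      have : (3:ℕ) ∣ m := by exact_mod_cast h3m
      omega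
    · have dec2 : ∀ u v : ZMod 3, u ≠ 0 → v ≠ 0 → v = u ∨ -v = u := by decide
      obtain ⟨b', hb'3, hb'odd, hb'sq⟩ :
          ∃ b' : ℤ, ((b' : ℤ) : ZMod 3) = ((a0 : ℤ) : ZMod 3) ∧ Odd b' ∧ b'^2 = b0^2 := by
        rcases dec2 _ _ h1 h2 with hb | hb
        · exact ⟨b0, hb, hoddb, rfl⟩
        · exact ⟨-b0, by push_cast; exact hb, hoddb.neg, by ring⟩
      obtain ⟨c', hc'3, hc'even, hc'sq⟩ :
          ∃ c' : ℤ, ((c' : ℤ) : ZMod 3) = -((a0 : ℤ) : ZMod 3) ∧ Even c' ∧ c'^2 = c0^2 := by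
        rcases dec2 _ _ h1 h3c with hc | hc
        · exact ⟨-c0, by push_cast; rw [hc], hevenc.neg, by ring⟩
        · exact ⟨c0, by rw [← hc]; push_cast; ring, hevenc, rfl⟩
      have hsum' : a0^2 + b'^2 + c'^2 = 6*(m:ℤ) := by rw [hb'sq, hc'sq]; exact hsum
      obtain ⟨ka, hka⟩ := hodda
      obtain ⟨kb, hkb⟩ := hb'odd
      obtain ⟨kc, hkc⟩ := hc'even
      have h3A : ∀ u : ZMod 3, u + u + u = 0 := by decide
      have d1 : (6:ℤ) ∣ (a0 + b' + 2*c') := by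
        have hd2 : (2:ℤ) ∣ (a0 + b' + 2*c') := by omega
        have hd3 : (3:ℤ) ∣ (a0 + b' + 2*c') := by
          apply (ZMod.intCast_zmod_eq_zero_iff_dvd _ 3).mp
          push_cast
          rw [hb'3, hc'3]
          ring
        omega
      have d2 : (6:ℤ) ∣ (a0 + b' - c') := by
        have hd2 : (2:ℤ) ∣ (a0 + b' - c') := by omega
        have hd3 : (3:ℤ) ∣ (a0 + b' - c') := by
          apply (ZMod.intCast_zmod_eq_zero_iff_dvd _ 3).mp
          push_cast
          rw [hb'3, hc'3]
          linear_combination h3A ((a0 : ℤ) : ZMod 3)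
        omega
      have d3 : (6:ℤ) ∣ (b' - a0) := by
        have hd2 : (2:ℤ) ∣ (b' - a0) := by omega
        have hd3 : (3:ℤ) ∣ (b' - a0) := by
          apply (ZMod.intCast_zmod_eq_zero_iff_dvd _ 3).mp
          push_cast
          rw [hb'3]
          ring
        omega
      obtain ⟨X, hX⟩ := d1
      obtain ⟨Y, hY⟩ := d2
      obtain ⟨Z, hZ⟩ := d3
      refine ⟨X, Y, Z, ?_⟩
      have h36 : (36:ℤ) * (m:ℤ) = 36 * (X^2 + 2*Y^2 + 3*Z^2) := by
        linear_combination -6*hsum' + (a0 + b' + 2*c' + 6*X)*hX + 2*(a0 + b' - c' + 6*Y)*hY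
          + 3*(b' - a0 + 6*Z)*hZ
      exact mul_left_cancel₀ (by norm_num) h36


lemma two_mul_tri (k : ℤ) : 2 * tri k = k * (k+1) := by
  have h : (2:ℤ) ∣ k * (k+1) := (Int.even_mul_succ_self k).two_dvd
  exact Int.mul_ediv_cancel' h


theorem stmt17 (n : ℕ) : ∃ x y z : ℤ, (n : ℤ) = x ^ 2 + tri y + 3 * tri z := by
  obtain ⟨A, X, B, hm⟩ := odd_123 (2*n+1) (by omega)
  have hm' : 2*(n:ℤ) + 1 = A^2 + 2*X^2 + 3*B^2 := by push_cast at hm; linarith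
  -- A + B is odd
  have hAB : Odd (A + B) := by
    rcases Int.even_or_odd (A + B) with h | h
    · exfalso
      obtain ⟨k, hk⟩ := h
      have hfac : A^2 + 3*B^2 = (A+B)*(A-B) + 4*B^2 := by ring
      rw [hk] at hfac
      have : A^2 + 3*B^2 = 2*((k)*(A-B)) + 4*B^2 := by rw [hfac]; ring
      omega
    · exact h
  obtain ⟨k, hk⟩ := hAB
  -- A + 3B = 2(k+B)+1, A - B = 2(k-B)+1
  refine ⟨X, k + B, k - B, ?_⟩
  have t1 := two_mul_tri (k + B)
  have t2 := two_mul_tri (k - B)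
  have h8 : (8:ℤ) * (n:ℤ) = 8 * (X ^ 2 + tri (k+B) + 3 * tri (k-B)) := by
    linear_combination 4*hm' - 4*t1 - 12*t2 + 4*(A + 2*k + 1 - B)*hk
  exact mul_left_cancel₀ (by norm_num) h8
end
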